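/- arXiv:2204.13770 — 2 statements merged into one kernel-verified Lean document; each statement's English description precedes it below -/
import Mathlib

section
/- Let V be a 4-dimensional real vector space with a neutral scalar product g, let I be a complex structure on V compatible with g, let X ∈ V be a nonzero null vector, and let U ∈ V be a null vector with g(X,U)=0 and g(IX,U) ≠ 0. Then span{X,IX}, span{X,U} and span{IX,IU} are pairwise distinct 2-dimensional totally isotropic subspaces of V; moreover, every 2-dimensional totally isotropic subspace of V containing X equals span{X,IX} or span{X,U}, and every 2-dimensional totally isotropic subspace of V containing IX equals span{X,IX} or span{IX,IU}. -/
open Module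

/-- A neutral scalar product on a real vector space: a bilinear form admitting a basis
`(e₀,e₁,e₂,e₃)` that is `g`-orthogonal with `g(e₀,e₀)=g(e₁,e₁)=1`, `g(e₂,e₂)=g(e₃,e₃)=-1`
(so in particular the space is 4-dimensional and `g` is symmetric, nondegenerate of
signature (2,2)). -/
def IsNeutral {V : Type*} [AddCommGroup V] [Module ℝ V]
    (g : V →ₗ[ℝ] V →ₗ[ℝ] ℝ) : Prop :=
  ∃ e : Basis (Fin 4) ℝ V,
    (∀ i j, i ≠ j → g (e i) (e j) = 0) ∧
    g (e 0) (e 0) = 1 ∧ g (e 1) (e 1) = 1 ∧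
    g (e 2) (e 2) = -1 ∧ g (e 3) (e 3) = -1

/-- `W` is a 2-dimensional totally isotropic subspace for `g` (a null 2-plane). -/
def IsNullPlane {V : Type*} [AddCommGroup V] [Module ℝ V]
    (g : V →ₗ[ℝ] V →ₗ[ℝ] ℝ) (W : Submodule ℝ V) : Prop :=
  finrank ℝ W = 2 ∧ ∀ u ∈ W, ∀ v ∈ W, g u v = 0

/-! The orthogonal complement of `X` is the 3-space spanned by `U`, `X`, `IX` (the functional
`g X` is nonzero since `g(X, IU) = -g(IX, U)`), and on it the quadratic form reads
`g(w, w) = 2 b c g(IX, U)` for `w = c U + a X + b IX`. So its null vectors fill exactly the two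
planes `span{X, IX}` and `span{X, U}`, and a null plane through `X`, being covered by them, is
one of them. The planes through `IX` are obtained by running the same argument with
`(IX, X, IU)` in place of `(X, IX, U)`. The three planes are distinct because each is totally
isotropic while `g(IX, U)` and `g(X, IU)` do not vanish. -/

open Submodule

section Isotropy

variable {R M : Type*} [CommSemiring R] [AddCommMonoid M] [Module R M]
  (g : M →ₗ[R] M →ₗ[R] R)

theorem isotropic_span_pair {a b : M} (haa : g a a = 0) (hab : g a b = 0) (hba : g b a = 0)
    (hbb : g b b = 0) : ∀ u ∈ span R {a, b}, ∀ v ∈ span R {a, b}, g u v = 0 := by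
  intro u hu v hv
  obtain ⟨s, t, rfl⟩ := mem_span_pair.mp hu
  obtain ⟨p, q, rfl⟩ := mem_span_pair.mp hv
  simp [haa, hab, hba, hbb]

theorem ne_of_isotropic_of_apply_ne_zero {P Q : Submodule R M}
    (hP : ∀ u ∈ P, ∀ v ∈ P, g u v = 0) {a b : M} (ha : a ∈ P) (hb : b ∈ Q)
    (hab : g a b ≠ 0) : P ≠ Q := by
  rintro rfl
  exact hab (hP a ha b hb)

end Isotropy

section LinearAlgebra

variable {K V : Type*} [Field K] [AddCommGroup V] [Module K V]

theorem linearIndependent_pair_of_apply_eq_zero {f : Dual K V} {a b : V} (ha : a ≠ 0)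
    (hfa : f a = 0) (hfb : f b ≠ 0) : LinearIndependent K ![a, b] :=
  (LinearIndependent.pair_iff' ha).mpr fun c hc => hfb (by rw [← hc, map_smul, hfa, smul_zero])

theorem finrank_span_pair {a b : V} (h : LinearIndependent K ![a, b]) :
    finrank K (span K {a, b}) = 2 := by
  rw [← Matrix.range_cons_cons_empty a b ![], finrank_span_eq_card h, Fintype.card_fin]

theorem span_range_eq_ker [FiniteDimensional K V] {n : ℕ} (hV : finrank K V = n + 1)
    {f : Dual K V} (hf : f ≠ 0) {v : Fin n → V} (hv : LinearIndependent K v)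
    (hvf : ∀ i, f (v i) = 0) : span K (Set.range v) = LinearMap.ker f := by
  refine eq_of_le_of_finrank_eq (span_le.mpr (Set.range_subset_iff.mpr hvf)) ?_
  have := f.finrank_ker_add_one_of_ne_zero hf
  rw [finrank_span_eq_card hv, Fintype.card_fin]
  omega

end LinearAlgebra

section NullPlanes

variable {V : Type*} [AddCommGroup V] [Module ℝ V] {g : V →ₗ[ℝ] V →ₗ[ℝ] ℝ}

theorem isNullPlane_span_pair {a b : V} (h : LinearIndependent ℝ ![a, b]) (haa : g a a = 0)
    (hab : g a b = 0) (hba : g b a = 0) (hbb : g b b = 0) : IsNullPlane g (span ℝ {a, b}) :=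
  ⟨finrank_span_pair h, isotropic_span_pair g haa hab hba hbb⟩

variable (hg : LinearMap.BilinForm.IsSymm g) {X Y U : V} (hX : X ≠ 0) (hXX : g X X = 0)
  (hXY : g X Y = 0) (hYY : g Y Y = 0) (hXU : g X U = 0) (hUU : g U U = 0) (hYU : g Y U ≠ 0)
include hg hX hXX hXY hXU hYU

include hYY in
theorem isNullPlane_span_left : IsNullPlane g (span ℝ {X, Y}) :=
  isNullPlane_span_pair (linearIndependent_pair_of_apply_eq_zero (f := g.flip U) hX hXU hYU)
    hXX hXY (hg.eq X Y ▸ hXY) hYY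

include hUU in
theorem isNullPlane_span_right : IsNullPlane g (span ℝ {X, U}) :=
  isNullPlane_span_pair (linearIndependent_pair_of_apply_eq_zero (f := g Y) hX
    (hg.eq X Y ▸ hXY) hYU) hXX hXU (hg.eq X U ▸ hXU) hUU

variable [FiniteDimensional ℝ V] (hV : finrank ℝ V = 4) (hgX : g X ≠ 0)
include hV hgX hYY

theorem ker_eq_span_triple : LinearMap.ker (g X) = span ℝ {U, X, Y} := by
  have hind : LinearIndependent ℝ ![U, X, Y] := by
    refine linearIndependent_finCons.mpr ⟨linearIndependent_pair_of_apply_eq_zero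
      (f := g.flip U) hX hXU hYU, fun hU => hYU ?_⟩
    rw [Matrix.range_cons_cons_empty] at hU
    exact (isNullPlane_span_left hg hX hXX hXY hYY hXU hYU).2 Y (subset_span (by simp)) U hU
  have hker : ∀ i, g X (![U, X, Y] i) = 0 := fun i => by fin_cases i <;> simp [hXU, hXX, hXY]
  rw [← span_range_eq_ker hV hgX hind hker, Matrix.range_cons, Matrix.range_cons_cons_empty,
    Set.singleton_union]

include hUU

theorem mem_span_pair_or_mem_span_pair_of_isotropic {w : V} (hw : g X w = 0) (hww : g w w = 0) :
    w ∈ span ℝ {X, Y} ∨ w ∈ span ℝ {X, U} := by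
  rw [← LinearMap.mem_ker, ker_eq_span_triple hg hX hXX hXY hYY hXU hYU hV hgX,
    mem_span_insert] at hw
  obtain ⟨c, z, hz, rfl⟩ := hw
  obtain ⟨a, b, rfl⟩ := mem_span_pair.mp hz
  have hbc : b * c * g Y U = 0 := by
    simp only [map_add, map_smul, LinearMap.add_apply, LinearMap.smul_apply, smul_eq_mul, hXX,
      hXY, hYY, hXU, hUU, hg.eq Y X, hg.eq U X, hg.eq U Y] at hww
    linear_combination hww / 2
  rcases mul_eq_zero.mp ((mul_eq_zero.mp hbc).resolve_right hYU) with rfl | rfl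
  · exact Or.inr (mem_span_pair.mpr ⟨a, c, by rw [zero_smul, add_zero, add_comm]⟩)
  · exact Or.inl (mem_span_pair.mpr ⟨a, b, by rw [zero_smul, zero_add]⟩)

theorem eq_or_eq_of_isNullPlane_of_mem (W : Submodule ℝ V) (hW : IsNullPlane g W)
    (hXW : X ∈ W) : W = span ℝ {X, Y} ∨ W = span ℝ {X, U} := by
  have hcover : (W : Set V) ⊆ span ℝ {X, Y} ∪ span ℝ {X, U} := fun w hw =>
    mem_span_pair_or_mem_span_pair_of_isotropic hg hX hXX hXY hYY hXU hUU hYU hV hgX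
      (hW.2 X hXW w hw) (hW.2 w hw w hw)
  refine (AddSubgroupClass.subset_union.mp hcover).imp (fun hle => ?_) (fun hle => ?_)
  · exact eq_of_le_of_finrank_eq hle
      (by rw [hW.1, (isNullPlane_span_left hg hX hXX hXY hYY hXU hYU).1])
  · exact eq_of_le_of_finrank_eq hle
      (by rw [hW.1, (isNullPlane_span_right hg hX hXX hXY hXU hUU hYU).1])

end NullPlanes

section ComplexStructure

variable {R M : Type*} [CommRing R] [AddCommGroup M] [Module R M] {g : M →ₗ[R] M →ₗ[R] R}
  {I : M →ₗ[R] M} (hI : ∀ v, I (I v) = -v) (hIg : ∀ u v, g (I u) (I v) = g u v)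
include hI hIg

theorem apply_map_right_eq_neg (u v : M) : g u (I v) = -g (I u) v := by
  rw [← hIg u (I v), hI, map_neg]

theorem apply_self_map_eq_zero [IsAddTorsionFree R] (hg : LinearMap.BilinForm.IsSymm g) (v : M) :
    g v (I v) = 0 :=
  self_eq_neg.mp ((apply_map_right_eq_neg hI hIg v v).trans (by rw [hg.eq]))

end ComplexStructure

section Neutral

variable {V : Type*} [AddCommGroup V] [Module ℝ V] {g : V →ₗ[ℝ] V →ₗ[ℝ] ℝ}

theorem IsNeutral.finiteDimensional (hg : IsNeutral g) : FiniteDimensional ℝ V :=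
  let ⟨e, _⟩ := hg
  .of_basis e

theorem IsNeutral.finrank_eq (hg : IsNeutral g) : finrank ℝ V = 4 := by
  obtain ⟨e, -⟩ := hg
  rw [finrank_eq_card_basis e, Fintype.card_fin]

theorem IsNeutral.isSymm (hg : IsNeutral g) : LinearMap.BilinForm.IsSymm g := by
  obtain ⟨e, horth, -⟩ := hg
  refine (LinearMap.BilinForm.isSymm_iff_basis e).mpr fun i j => ?_
  rcases eq_or_ne i j with rfl | hij
  · rfl
  · rw [horth i j hij, horth j i hij.symm]

end Neutral

/-- Lemma `beta-planes`: given a nonzero null vector `X` and a null vector `U` with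
`g(X,U) = 0`, `g(IX,U) ≠ 0`, the planes `span{X,IX}`, `span{X,U}` and `span{IX,IU}` are
pairwise distinct null 2-planes; every null 2-plane containing `X` is `span{X,IX}` or
`span{X,U}`, and every null 2-plane containing `IX` is `span{X,IX}` or `span{IX,IU}`. -/
theorem null_planes_through_X {V : Type*} [AddCommGroup V] [Module ℝ V]
    (g : V →ₗ[ℝ] V →ₗ[ℝ] ℝ) (hg : IsNeutral g)
    (I : V →ₗ[ℝ] V) (hI : ∀ v, I (I v) = -v)
    (hIg : ∀ u v, g (I u) (I v) = g u v)
    (X : V) (hX : X ≠ 0) (hXnull : g X X = 0)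
    (U : V) (hUnull : g U U = 0) (hXU : g X U = 0) (hIXU : g (I X) U ≠ 0) :
    IsNullPlane g (Submodule.span ℝ {X, I X}) ∧
    IsNullPlane g (Submodule.span ℝ {X, U}) ∧
    IsNullPlane g (Submodule.span ℝ {I X, I U}) ∧
    Submodule.span ℝ {X, I X} ≠ Submodule.span ℝ {X, U} ∧
    Submodule.span ℝ {X, I X} ≠ Submodule.span ℝ {I X, I U} ∧
    Submodule.span ℝ {X, U} ≠ Submodule.span ℝ {I X, I U} ∧
    (∀ W : Submodule ℝ V, IsNullPlane g W → X ∈ W →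
      W = Submodule.span ℝ {X, I X} ∨ W = Submodule.span ℝ {X, U}) ∧
    (∀ W : Submodule ℝ V, IsNullPlane g W → I X ∈ W →
      W = Submodule.span ℝ {X, I X} ∨ W = Submodule.span ℝ {I X, I U}) := by
  have := hg.finiteDimensional
  have hV := hg.finrank_eq
  have hsymm := hg.isSymm
  have hIX : I X ≠ 0 := fun h => hX (by simpa [h] using hI X)
  have hXIX : g X (I X) = 0 := apply_self_map_eq_zero hI hIg hsymm X
  have hIXX : g (I X) X = 0 := hsymm.eq X (I X) ▸ hXIX
  have hIXIX : g (I X) (I X) = 0 := (hIg X X).trans hXnull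
  have hIXIU : g (I X) (I U) = 0 := (hIg X U).trans hXU
  have hIUIU : g (I U) (I U) = 0 := (hIg U U).trans hUnull
  have hXIU : g X (I U) ≠ 0 := by rwa [apply_map_right_eq_neg hI hIg, neg_ne_zero]
  have hgX : g X ≠ 0 := fun h => hXIU (by simp [h])
  have hgIX : g (I X) ≠ 0 := fun h => hIXU (by simp [h])
  have hP₁ := isNullPlane_span_left hsymm hX hXnull hXIX hIXIX hXU hIXU
  have hP₂ := isNullPlane_span_right hsymm hX hXnull hXIX hXU hUnull hIXU
  have hP₃ := isNullPlane_span_right hsymm hIX hIXIX hIXX hIXIU hIUIU hXIU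
  refine ⟨hP₁, hP₂, hP₃,
    ne_of_isotropic_of_apply_ne_zero g hP₁.2 (subset_span (by simp)) (subset_span (by simp)) hIXU,
    ne_of_isotropic_of_apply_ne_zero g hP₁.2 (subset_span (by simp)) (subset_span (by simp)) hXIU,
    ne_of_isotropic_of_apply_ne_zero g hP₂.2 (subset_span (by simp)) (subset_span (by simp)) hXIU,
    eq_or_eq_of_isNullPlane_of_mem hsymm hX hXnull hXIX hIXIX hXU hUnull hIXU hV hgX, ?_⟩
  simpa only [Set.pair_comm X] using
    eq_or_eq_of_isNullPlane_of_mem hsymm hIX hIXIX hIXX hXnull hIXIU hIUIU hXIU hV hgIX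
end

section
/- Let V be a 4-dimensional real vector space with a neutral scalar product g, and let X ∈ V be a nonzero null vector. Then there exist exactly two 2-dimensional totally isotropic subspaces of V containing X. -/
open Module

/-!
Identify `V` with the 2×2 real matrices so that `g v v` becomes the determinant. A nonzero null
vector `X` is then a rank-one matrix `p qᵀ`, and `g (p qᵀ) (r sᵀ) = (p ∧ r) (q ∧ s) / 2`. So the
planes `{p sᵀ}` and `{r qᵀ}` are null and contain `X`, and every null vector `r sᵀ` orthogonal
to `X` has `r ∥ p` or `s ∥ q`, i.e. lies in one of them. A null plane through `X` is therefore
covered by these two subspaces, hence contained in, and by dimension equal to, one of them.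
-/

def wedge (p r : ℝ × ℝ) : ℝ := p.1 * r.2 - p.2 * r.1

lemma wedge_swap (p r : ℝ × ℝ) : wedge r p = -wedge p r := by
  simp only [wedge]; ring

lemma wedge_self (p : ℝ × ℝ) : wedge p p = 0 := by
  simp only [wedge]; ring

lemma exists_wedge_ne_zero {p : ℝ × ℝ} (hp : p ≠ 0) : ∃ r, wedge p r ≠ 0 := by
  refine ⟨(-p.2, p.1), fun h => hp ?_⟩
  simp only [wedge] at h
  ext <;> simp only [Prod.fst_zero, Prod.snd_zero] <;> nlinarith [sq_nonneg p.1, sq_nonneg p.2]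

lemma exists_eq_smul_of_wedge_eq_zero {p r : ℝ × ℝ} (hp : p ≠ 0) (h : wedge p r = 0) :
    ∃ t : ℝ, r = t • p := by
  simp only [wedge] at h
  by_cases h1 : p.1 = 0
  · have h2 : p.2 ≠ 0 := fun h2 => hp (Prod.ext h1 h2)
    refine ⟨r.2 / p.2, Prod.ext ?_ ?_⟩
    · simp only [h1, zero_mul, zero_sub, neg_eq_zero, mul_eq_zero, h2, false_or] at h
      simp [h, h1]
    · simp [h2]
  · refine ⟨r.1 / p.1, Prod.ext ?_ ?_⟩
    · simp [h1]
    · simp only [Prod.smul_snd, smul_eq_mul]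
      field_simp
      linarith

lemma exists_eq_outer_of_det_eq_zero {x y z w : ℝ} (hdet : x * w - y * z = 0)
    (hne : (x, y, z, w) ≠ 0) :
    ∃ p q : ℝ × ℝ, p ≠ 0 ∧ q ≠ 0 ∧
      x = p.1 * q.1 ∧ y = p.1 * q.2 ∧ z = p.2 * q.1 ∧ w = p.2 * q.2 := by
  by_cases hxy : (x, y) = 0
  · simp only [Prod.mk_eq_zero] at hxy hne
    obtain ⟨rfl, rfl⟩ := hxy
    exact ⟨(0, 1), (z, w), by simp, by simpa using hne, by simp, by simp, by simp, by simp⟩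
  · obtain ⟨t, ht⟩ := exists_eq_smul_of_wedge_eq_zero hxy (r := (z, w)) hdet
    simp only [Prod.ext_iff, Prod.smul_mk, smul_eq_mul] at ht
    exact ⟨(1, t), (x, y), by simp, hxy, by simp, by simp, by simp [ht.1], by simp [ht.2]⟩

lemma IsNullPlane.eq_of_le {V : Type*} [AddCommGroup V] [Module ℝ V]
    {g : V →ₗ[ℝ] V →ₗ[ℝ] ℝ} {W W' : Submodule ℝ V} (hW : IsNullPlane g W)
    (hW' : IsNullPlane g W') (h : W ≤ W') : W = W' :=
  have : Module.Finite ℝ W' := Module.finite_of_finrank_pos (hW'.1 ▸ two_pos)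
  Submodule.eq_of_le_of_finrank_eq h (hW.1.trans hW'.1.symm)

section NeutralBasis

variable {V : Type*} [AddCommGroup V] [Module ℝ V]

def IsNeutralBasis (g : V →ₗ[ℝ] V →ₗ[ℝ] ℝ) (e : Basis (Fin 4) ℝ V) : Prop :=
  (∀ i j, i ≠ j → g (e i) (e j) = 0) ∧
    g (e 0) (e 0) = 1 ∧ g (e 1) (e 1) = 1 ∧ g (e 2) (e 2) = -1 ∧ g (e 3) (e 3) = -1

variable {g : V →ₗ[ℝ] V →ₗ[ℝ] ℝ} {e : Basis (Fin 4) ℝ V}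

lemma IsNeutralBasis.apply_eq (he : IsNeutralBasis g e) (u v : V) :
    g u v = e.equivFun u 0 * e.equivFun v 0 + e.equivFun u 1 * e.equivFun v 1
      - e.equivFun u 2 * e.equivFun v 2 - e.equivFun u 3 * e.equivFun v 3 := by
  obtain ⟨horth, h0, h1, h2, h3⟩ := he
  conv_lhs => rw [← e.sum_equivFun u, ← e.sum_equivFun v]
  simp only [Fin.sum_univ_four, map_add, map_smul, LinearMap.add_apply, LinearMap.smul_apply,
    smul_eq_mul, h0, h1, h2, h3, horth, ne_eq, Fin.reduceEq, not_false_eq_true]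
  ring

variable (e) in
/-- In the coordinates `v = a e₀ + b e₁ + c e₂ + d e₃`, the map
`v ↦ [[a + c, -(b + d)], [b - d, a - c]]` identifies `V` with the 2×2 real matrices, and
`g v v` with the determinant; `outer e p q` is the vector of the rank-one matrix `p qᵀ`. -/
noncomputable def outer : (ℝ × ℝ) →ₗ[ℝ] (ℝ × ℝ) →ₗ[ℝ] V :=
  LinearMap.mk₂ ℝ
    (fun p q => e.equivFun.symm ![(p.1 * q.1 + p.2 * q.2) / 2, (p.2 * q.1 - p.1 * q.2) / 2,
      (p.1 * q.1 - p.2 * q.2) / 2, -(p.1 * q.2 + p.2 * q.1) / 2])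
    (fun _ _ _ => by rw [← map_add]; congr 1; ext i; fin_cases i <;> simp <;> ring)
    (fun _ _ _ => by rw [← map_smul]; congr 1; ext i; fin_cases i <;> simp <;> ring)
    (fun _ _ _ => by rw [← map_add]; congr 1; ext i; fin_cases i <;> simp <;> ring)
    (fun _ _ _ => by rw [← map_smul]; congr 1; ext i; fin_cases i <;> simp <;> ring)

lemma equivFun_outer (p q : ℝ × ℝ) :
    e.equivFun (outer e p q) = ![(p.1 * q.1 + p.2 * q.2) / 2, (p.2 * q.1 - p.1 * q.2) / 2,
      (p.1 * q.1 - p.2 * q.2) / 2, -(p.1 * q.2 + p.2 * q.1) / 2] := by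
  simp only [outer, LinearMap.mk₂_apply, LinearEquiv.apply_symm_apply]

lemma IsNeutralBasis.apply_outer_outer (he : IsNeutralBasis g e) (p q r s : ℝ × ℝ) :
    g (outer e p q) (outer e r s) = wedge p r * wedge q s / 2 := by
  simp only [he.apply_eq, equivFun_outer, wedge, Matrix.cons_val_zero, Matrix.cons_val_one,
    Matrix.cons_val]
  ring

lemma IsNeutralBasis.exists_eq_outer (he : IsNeutralBasis g e) {X : V} (hX : X ≠ 0)
    (hXX : g X X = 0) : ∃ p q : ℝ × ℝ, p ≠ 0 ∧ q ≠ 0 ∧ outer e p q = X := by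
  rw [he.apply_eq] at hXX
  generalize ha : e.equivFun X = a at hXX
  have hne : (a 0 + a 2, -(a 1 + a 3), a 1 - a 3, a 0 - a 2) ≠ 0 := by
    intro h
    simp only [Prod.mk_eq_zero] at h
    refine hX (e.equivFun.map_eq_zero_iff.mp ?_)
    rw [ha]
    ext i
    fin_cases i <;> simp <;> linarith
  obtain ⟨p, q, hp, hq, hx, hy, hz, hw⟩ :=
    exists_eq_outer_of_det_eq_zero (by linear_combination hXX) hne
  refine ⟨p, q, hp, hq, e.equivFun.injective ?_⟩
  rw [equivFun_outer, ha]
  ext i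
  fin_cases i <;> simp <;> linarith

lemma IsNeutralBasis.outer_eq_zero_iff (he : IsNeutralBasis g e) {p q : ℝ × ℝ} :
    outer e p q = 0 ↔ p = 0 ∨ q = 0 := by
  refine ⟨fun h => ?_, by rintro (rfl | rfl) <;> simp⟩
  by_contra! hpq
  obtain ⟨r, hr⟩ := exists_wedge_ne_zero hpq.1
  obtain ⟨s, hs⟩ := exists_wedge_ne_zero hpq.2
  have := he.apply_outer_outer p q r s
  rw [h, map_zero, LinearMap.zero_apply] at this
  exact mul_ne_zero hr hs (by linarith)

variable (e) in
noncomputable def alphaPlane (p : ℝ × ℝ) : Submodule ℝ V := LinearMap.range (outer e p)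

variable (e) in
noncomputable def betaPlane (q : ℝ × ℝ) : Submodule ℝ V := LinearMap.range ((outer e).flip q)

lemma outer_mem_alphaPlane (p q : ℝ × ℝ) : outer e p q ∈ alphaPlane e p := ⟨q, rfl⟩

lemma outer_mem_betaPlane (p q : ℝ × ℝ) : outer e p q ∈ betaPlane e q := ⟨p, rfl⟩

lemma IsNeutralBasis.isNullPlane_alphaPlane (he : IsNeutralBasis g e) {p : ℝ × ℝ}
    (hp : p ≠ 0) : IsNullPlane g (alphaPlane e p) := by
  refine ⟨?_, ?_⟩
  · have hinj : Function.Injective (outer e p) := (injective_iff_map_eq_zero _).mpr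
      fun q hq => (he.outer_eq_zero_iff.mp hq).resolve_left hp
    rw [alphaPlane, LinearMap.finrank_range_of_inj hinj, Module.finrank_prod, finrank_self]
  · rintro _ ⟨q, rfl⟩ _ ⟨s, rfl⟩
    rw [he.apply_outer_outer, wedge_self, zero_mul, zero_div]

lemma IsNeutralBasis.isNullPlane_betaPlane (he : IsNeutralBasis g e) {q : ℝ × ℝ}
    (hq : q ≠ 0) : IsNullPlane g (betaPlane e q) := by
  refine ⟨?_, ?_⟩
  · have hinj : Function.Injective ((outer e).flip q) := (injective_iff_map_eq_zero _).mpr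
      fun p hp => (he.outer_eq_zero_iff.mp (by rwa [LinearMap.flip_apply] at hp)).resolve_right hq
    rw [betaPlane, LinearMap.finrank_range_of_inj hinj, Module.finrank_prod, finrank_self]
  · rintro _ ⟨p, rfl⟩ _ ⟨r, rfl⟩
    rw [LinearMap.flip_apply, LinearMap.flip_apply, he.apply_outer_outer, wedge_self, mul_zero,
      zero_div]

lemma IsNeutralBasis.alphaPlane_ne_betaPlane (he : IsNeutralBasis g e) {p q : ℝ × ℝ}
    (hp : p ≠ 0) (hq : q ≠ 0) : alphaPlane e p ≠ betaPlane e q := by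
  intro h
  obtain ⟨r, hr⟩ := exists_wedge_ne_zero hp
  obtain ⟨s, hs⟩ := exists_wedge_ne_zero hq
  have hiso := (he.isNullPlane_alphaPlane hp).2 _ (outer_mem_alphaPlane p s) _
    (h ▸ outer_mem_betaPlane r q)
  rw [he.apply_outer_outer, wedge_swap q s] at hiso
  exact mul_ne_zero hr (neg_ne_zero.mpr hs) (by linarith)

lemma IsNeutralBasis.mem_alphaPlane_or_mem_betaPlane (he : IsNeutralBasis g e)
    {p q : ℝ × ℝ} (hp : p ≠ 0) (hq : q ≠ 0) {Y : V} (hY : g Y Y = 0)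
    (hXY : g (outer e p q) Y = 0) : Y ∈ alphaPlane e p ∨ Y ∈ betaPlane e q := by
  rcases eq_or_ne Y 0 with rfl | hY0
  · exact Or.inl (zero_mem _)
  obtain ⟨r, s, -, -, rfl⟩ := he.exists_eq_outer hY0 hY
  rw [he.apply_outer_outer] at hXY
  rcases mul_eq_zero.mp (by linarith : wedge p r * wedge q s = 0) with h | h
  · obtain ⟨t, rfl⟩ := exists_eq_smul_of_wedge_eq_zero hp h
    rw [map_smul, LinearMap.smul_apply]
    exact Or.inl (Submodule.smul_mem _ t (outer_mem_alphaPlane p s))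
  · obtain ⟨t, rfl⟩ := exists_eq_smul_of_wedge_eq_zero hq h
    rw [map_smul]
    exact Or.inr (Submodule.smul_mem _ t (outer_mem_betaPlane r q))

lemma IsNeutralBasis.eq_alphaPlane_or_eq_betaPlane (he : IsNeutralBasis g e)
    {p q : ℝ × ℝ} (hp : p ≠ 0) (hq : q ≠ 0) {W : Submodule ℝ V} (hW : IsNullPlane g W)
    (hXW : outer e p q ∈ W) : W = alphaPlane e p ∨ W = betaPlane e q := by
  have hsub : (W : Set V) ⊆ alphaPlane e p ∪ betaPlane e q := fun Y hY =>
    he.mem_alphaPlane_or_mem_betaPlane hp hq (hW.2 Y hY Y hY) (hW.2 _ hXW Y hY)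
  rcases AddSubgroupClass.subset_union.mp hsub with h | h
  · exact Or.inl (hW.eq_of_le (he.isNullPlane_alphaPlane hp) h)
  · exact Or.inr (hW.eq_of_le (he.isNullPlane_betaPlane hq) h)

end NeutralBasis

/-- Through every nonzero null vector of a 4-dimensional real vector space with a
neutral scalar product there pass exactly two 2-dimensional totally isotropic
subspaces (one self-dual `α`-plane and one anti-self-dual `β`-plane). -/
theorem two_null_planes_through_null_vector {V : Type*} [AddCommGroup V] [Module ℝ V]
    (g : V →ₗ[ℝ] V →ₗ[ℝ] ℝ) (hg : IsNeutral g)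
    (X : V) (hX : X ≠ 0) (hXnull : g X X = 0) :
    ∃ W₁ W₂ : Submodule ℝ V, W₁ ≠ W₂ ∧
      (IsNullPlane g W₁ ∧ X ∈ W₁) ∧
      (IsNullPlane g W₂ ∧ X ∈ W₂) ∧
      ∀ W : Submodule ℝ V, IsNullPlane g W → X ∈ W → W = W₁ ∨ W = W₂ := by
  obtain ⟨e, he⟩ : ∃ e, IsNeutralBasis g e := hg
  obtain ⟨p, q, hp, hq, rfl⟩ := he.exists_eq_outer hX hXnull
  exact ⟨alphaPlane e p, betaPlane e q, he.alphaPlane_ne_betaPlane hp hq,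
    ⟨he.isNullPlane_alphaPlane hp, outer_mem_alphaPlane p q⟩,
    ⟨he.isNullPlane_betaPlane hq, outer_mem_betaPlane p q⟩,
    fun _ hW hXW => he.eq_alphaPlane_or_eq_betaPlane hp hq hW hXW⟩
end
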